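/- Let p, q : ℝⁿ → ℝ be twice continuously differentiable and everywhere positive, write s_p = ∇log p and s_q = ∇log q, and let u : ℝⁿ → ℝ be continuously differentiable, such that the product x ↦ u(x)·(s_p(x) − s_q(x)) has compact support. Then ∫ ⟨s_p(x) − s_q(x), ∇u(x)⟩ p(x) dx = − ∫ [ ⟨s_p(x), s_p(x) − s_q(x)⟩ + div(s_p − s_q)(x) ] u(x) p(x) dx, where div denotes the divergence and the integrals are with respect to Lebesgue measure on ℝⁿ. -/

import Mathlib

/-! Write `w = s_p - s_q`. The vector field `V = (u p) • w` is `C¹` with compact support, so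
`∫ div V = 0`. The product rule and `∇p = p s_p` give
`div V = ⟨w, ∇u⟩ p + (⟨s_p, w⟩ + div w) u p`, and integrating yields the identity. -/

open MeasureTheory
open scoped RealInnerProductSpace

/-- The divergence `div F = Σ_d ∂F_d/∂x_d` of a vector field on `ℝⁿ`. -/
noncomputable def diverg {n : ℕ}
    (F : EuclideanSpace ℝ (Fin n) → EuclideanSpace ℝ (Fin n))
    (x : EuclideanSpace ℝ (Fin n)) : ℝ :=
  ∑ d : Fin n, fderiv ℝ F x (EuclideanSpace.single d 1) d

open Filter Topology

section CompactSupport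

variable {E G : Type*} [NormedAddCommGroup E] [NormedSpace ℝ E]
  [MeasurableSpace E] [BorelSpace E] {μ : Measure E} [μ.IsAddHaarMeasure]
  [NormedAddCommGroup G] [NormedSpace ℝ G] {g : E → G}

theorem integrable_fderiv_apply_of_hasCompactSupport (hg : ContDiff ℝ 1 g)
    (hsupp : HasCompactSupport g) (v : E) : Integrable (fun x => fderiv ℝ g x v) μ :=
  ((hg.continuous_fderiv one_ne_zero).clm_apply continuous_const).integrable_of_hasCompactSupport
    (hsupp.fderiv_apply ℝ v)

theorem integral_fderiv_apply_eq_zero_of_hasCompactSupport [FiniteDimensional ℝ E]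
    (hg : ContDiff ℝ 1 g) (hsupp : HasCompactSupport g) (v : E) :
    ∫ x, fderiv ℝ g x v ∂μ = 0 := by
  have := integral_smul_fderiv_eq_neg_fderiv_smul_of_integrable (μ := μ) (v := v)
    (f := fun _ => (1 : ℝ)) (by simp)
    (by simpa using integrable_fderiv_apply_of_hasCompactSupport hg hsupp v)
    (by simpa using hg.continuous.integrable_of_hasCompactSupport hsupp)
    (fun x _ => differentiableAt_const _) (fun x _ => hg.differentiable one_ne_zero x)
  simpa using this

end CompactSupport

theorem eventuallyEq_zero_of_notMem_tsupport_smul {X R M : Type*} [TopologicalSpace X]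
    [Zero R] [Zero M] [SMul R M] [NoZeroSMulDivisors R M] [TopologicalSpace M]
    [T1Space M] {f : X → R} {g : X → M} {x : X} (hx : x ∉ tsupport fun y => f y • g y)
    (hg : ContinuousAt g x) (hgx : g x ≠ 0) : f =ᶠ[𝓝 x] 0 := by
  rw [notMem_tsupport_iff_eventuallyEq] at hx
  filter_upwards [hx, hg.eventually_ne hgx] with y hfg hgy
  exact (eq_zero_or_eq_zero_of_smul_eq_zero hfg).resolve_right hgy

section Gradient

variable {E : Type*} [NormedAddCommGroup E] [InnerProductSpace ℝ E] [CompleteSpace E]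
  {f : E → ℝ} {x : E}

theorem ContDiff.gradient {n k : WithTop ℕ∞} (hf : ContDiff ℝ n f) (hk : k + 1 ≤ n) :
    ContDiff ℝ k (gradient f) :=
  (InnerProductSpace.toDual ℝ E).symm.contDiff.comp (hf.fderiv_right hk)

theorem fderiv_apply_eq_mul_inner_gradient_log (hf : DifferentiableAt ℝ f x) (hx : f x ≠ 0)
    (v : E) : fderiv ℝ f x v = f x * ⟪gradient (fun y => Real.log (f y)) x, v⟫ := by
  rw [inner_gradient_left, (hf.hasFDerivAt.log hx).fderiv]
  simp [hx]

theorem inner_gradient_eq_zero_of_notMem_tsupport_smul {u : E → ℝ} {w : E → E}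
    (hw : ContinuousAt w x) (hx : x ∉ tsupport fun y => u y • w y) :
    ⟪w x, gradient u x⟫ = 0 := by
  by_cases hwx : w x = 0
  · simp [hwx]
  · rw [(eventuallyEq_zero_of_notMem_tsupport_smul hx hw hwx).gradient_eq, Pi.zero_def,
      gradient_fun_const, inner_zero_right]

theorem integrable_inner_gradient_mul_of_hasCompactSupport_smul [FiniteDimensional ℝ E]
    [MeasurableSpace E] [BorelSpace E] {μ : Measure E} [μ.IsAddHaarMeasure]
    {u : E → ℝ} {w : E → E} (hu : ContDiff ℝ 1 u) (hw : Continuous w) (hf : Continuous f)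
    (hsupp : HasCompactSupport fun y => u y • w y) :
    Integrable (fun x => ⟪w x, gradient u x⟫ * f x) μ := by
  refine Continuous.integrable_of_hasCompactSupport ?_ (hsupp.mono' fun x hx => ?_)
  · exact (hw.inner (hu.gradient (k := 0) (by norm_num)).continuous).mul hf
  · by_contra hx_supp
    exact hx (by
      simp [inner_gradient_eq_zero_of_notMem_tsupport_smul hw.continuousAt hx_supp])

end Gradient

section Divergence

variable {n : ℕ} {F : EuclideanSpace ℝ (Fin n) → EuclideanSpace ℝ (Fin n)}

theorem diverg_smul {f : EuclideanSpace ℝ (Fin n) → ℝ} {x : EuclideanSpace ℝ (Fin n)}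
    (hf : DifferentiableAt ℝ f x) (hF : DifferentiableAt ℝ F x) :
    diverg (fun y => f y • F y) x = fderiv ℝ f x (F x) + f x * diverg F x := by
  simp only [diverg, fderiv_fun_smul hf hF, add_apply, smul_apply,
    ContinuousLinearMap.smulRight_apply, PiLp.add_apply, PiLp.smul_apply, smul_eq_mul]
  rw [Finset.sum_add_distrib, Finset.mul_sum, add_comm]
  congr 1
  conv_rhs => rw [← (EuclideanSpace.basisFun (Fin n) ℝ).sum_repr (F x)]
  simp [map_sum, mul_comm]

theorem diverg_mul_smul {u p : EuclideanSpace ℝ (Fin n) → ℝ} {x : EuclideanSpace ℝ (Fin n)}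
    (hu : DifferentiableAt ℝ u x) (hp : DifferentiableAt ℝ p x) (hpx : p x ≠ 0)
    (hF : DifferentiableAt ℝ F x) :
    diverg (fun y => (u y * p y) • F y) x = ⟪F x, gradient u x⟫ * p x
      + (⟪gradient (fun y => Real.log (p y)) x, F x⟫ + diverg F x) * u x * p x := by
  rw [diverg_smul (hu.fun_mul hp) hF, fderiv_fun_mul hu hp, add_apply, smul_apply, smul_apply,
    smul_eq_mul, smul_eq_mul, fderiv_apply_eq_mul_inner_gradient_log hp hpx,
    ← inner_gradient_left, real_inner_comm (F x) (gradient u x)]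
  ring

theorem integrable_diverg_of_hasCompactSupport (hF : ContDiff ℝ 1 F)
    (hsupp : HasCompactSupport F) : Integrable (diverg F) :=
  integrable_finsetSum _ fun d _ => (EuclideanSpace.proj (𝕜 := ℝ) d).integrable_comp
    (integrable_fderiv_apply_of_hasCompactSupport hF hsupp (EuclideanSpace.single d 1))

theorem integral_diverg_eq_zero_of_hasCompactSupport (hF : ContDiff ℝ 1 F)
    (hsupp : HasCompactSupport F) : ∫ x, diverg F x = 0 := by
  have hint (d : Fin n) := integrable_fderiv_apply_of_hasCompactSupport (μ := volume) hF hsupp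
    (EuclideanSpace.single d 1)
  change ∫ x, ∑ d, EuclideanSpace.proj d (fderiv ℝ F x _) = 0
  rw [integral_finsetSum _ fun d _ =>
    (EuclideanSpace.proj (𝕜 := ℝ) d).integrable_comp (hint d)]
  refine Finset.sum_eq_zero fun d _ => ?_
  rw [(EuclideanSpace.proj d).integral_comp_comm (hint d),
    integral_fderiv_apply_eq_zero_of_hasCompactSupport hF hsupp, map_zero]

end Divergence

/-- **The integration-by-parts identity behind `Grad^(F,2)` of the Fisher training method.**
For twice continuously differentiable, everywhere positive `p, q : ℝⁿ → ℝ` with scores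
`s_p = ∇log p`, `s_q = ∇log q`, and a continuously differentiable `u : ℝⁿ → ℝ` such that
`u·(s_p − s_q)` has compact support,
`∫ ⟨s_p − s_q, ∇u⟩ p dx = − ∫ (⟨s_p, s_p − s_q⟩ + div(s_p − s_q)) u p dx`. -/
theorem fisher_grad2_integration_by_parts
    (n : ℕ)
    (p q : EuclideanSpace ℝ (Fin n) → ℝ)
    (hp : ContDiff ℝ 2 p) (hq : ContDiff ℝ 2 q)
    (hppos : ∀ x, 0 < p x) (hqpos : ∀ x, 0 < q x)
    (sp sq : EuclideanSpace ℝ (Fin n) → EuclideanSpace ℝ (Fin n))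
    (hsp : ∀ x, sp x = gradient (fun y => Real.log (p y)) x)
    (hsq : ∀ x, sq x = gradient (fun y => Real.log (q y)) x)
    (u : EuclideanSpace ℝ (Fin n) → ℝ)
    (hu : ContDiff ℝ 1 u)
    (hsupp : HasCompactSupport (fun x => u x • (sp x - sq x))) :
    ∫ x, ⟪sp x - sq x, gradient u x⟫ * p x
      = -∫ x, (⟪sp x, sp x - sq x⟫ + diverg (fun y => sp y - sq y) x) * u x * p x := by
  have hscore {f : EuclideanSpace ℝ (Fin n) → ℝ} (hf : ContDiff ℝ 2 f)
      (hpos : ∀ x, 0 < f x) : ContDiff ℝ 1 (gradient fun y => Real.log (f y)) :=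
    (hf.log fun x => (hpos x).ne').gradient (by norm_num)
  have hw : ContDiff ℝ 1 fun y => sp y - sq y := by
    simpa only [← hsp, ← hsq] using (hscore hp hppos).sub (hscore hq hqpos)
  have hV : ContDiff ℝ 1 fun x => (u x * p x) • (sp x - sq x) :=
    (hu.mul (hp.of_le one_le_two)).smul hw
  have hV_supp : HasCompactSupport fun x => (u x * p x) • (sp x - sq x) := by
    convert hsupp.smul_left (f := p) using 1
    funext x
    simp only [Pi.smul_apply', smul_smul, mul_comm]
  have hR : (fun x => (⟪sp x, sp x - sq x⟫ + diverg (fun y => sp y - sq y) x) * u x * p x)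
      = fun x => diverg (fun x => (u x * p x) • (sp x - sq x)) x
        - ⟪sp x - sq x, gradient u x⟫ * p x := by
    funext x
    rw [diverg_mul_smul (hu.differentiable one_ne_zero x) (hp.differentiable two_ne_zero x)
      (hppos x).ne' (hw.differentiable one_ne_zero x), ← hsp x]
    ring
  rw [hR, integral_sub (integrable_diverg_of_hasCompactSupport hV hV_supp)
    (integrable_inner_gradient_mul_of_hasCompactSupport_smul hu hw.continuous hp.continuous hsupp),
    integral_diverg_eq_zero_of_hasCompactSupport hV hV_supp, zero_sub, neg_neg]
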